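/- For every l > 0 and every C₂ > 0, there exist constants β > 0 and C' > 0 such that for all x ∈ (0, 1): setting ε = x^β, one has C₁ * ε^(N₁) + C₁ * ε^(-N₂) * exp(C₂ / (log ε * x^(1/n))) ≤ C' * x^l, where N₁, N₂, n, C₁ > 0 are fixed. (Note log ε < 0 so the exponent is negative; the claim expresses that exponential decay dominates polynomial growth.) -/

import Mathlib

/-!
Put `x = exp (-t)` with `t > 0` and `β = l / N₁`. The first term is then exactly `C₁ x^l`, and
the second is `C₁ x^l · exp ((l + β N₂) t - (C₂ / β) e^{t/n} / t)`. Since `e^{t/n} ≥ (t/n)³ / 6`,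
that exponent is bounded by a concave quadratic in `t`, hence bounded above uniformly in `t`.
-/

open Real

lemma mul_sub_mul_sq_le_sq_div {a : ℝ} (ha : 0 < a) (b t : ℝ) :
    b * t - a * t ^ 2 ≤ b ^ 2 / (4 * a) := by
  rw [le_div_iff₀ (by positivity)]
  nlinarith [sq_nonneg (b - 2 * a * t)]

lemma exists_forall_mul_sub_exp_div_le {k c : ℝ} (hk : 0 < k) (hc : 0 < c) (b : ℝ) :
    ∃ M, ∀ t > 0, b * t - c * exp (k * t) / t ≤ M := by
  refine ⟨b ^ 2 / (4 * (c * k ^ 3 / 6)), fun t ht => ?_⟩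
  have hcube : c * k ^ 3 / 6 * t ^ 2 ≤ c * exp (k * t) / t := by
    have h := pow_div_factorial_le_exp (x := k * t) (mul_pos hk ht).le 3
    rw [le_div_iff₀ ht]
    calc c * k ^ 3 / 6 * t ^ 2 * t = c * ((k * t) ^ 3 / (Nat.factorial 3 : ℕ)) := by
          norm_num [Nat.factorial]; ring
      _ ≤ c * exp (k * t) := by gcongr
  linarith [mul_sub_mul_sq_le_sq_div (by positivity : 0 < c * k ^ 3 / 6) b t]

theorem stmt_3_general (N₁ N₂ C₁ : ℝ) (n : ℕ) (hN₁ : 0 < N₁)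
    (hC₁ : 0 < C₁) (hn : 1 ≤ n) :
    ∀ l > (0 : ℝ), ∀ C₂ > (0 : ℝ), ∃ β > (0 : ℝ), ∃ C' > (0 : ℝ),
      ∀ x ∈ Set.Ioo (0 : ℝ) 1,
        C₁ * (x ^ β) ^ N₁ +
          C₁ * (x ^ β) ^ (-N₂) *
            Real.exp (C₂ / (Real.log (x ^ β) * x ^ ((1 : ℝ) / n))) ≤
        C' * x ^ l := by
  intro l hl C₂ hC₂
  set β := l / N₁ with hβ_def
  have hβ : 0 < β := div_pos hl hN₁
  have hk : (0 : ℝ) < 1 / n := one_div_pos.2 (by exact_mod_cast hn)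
  obtain ⟨M, hM⟩ := exists_forall_mul_sub_exp_div_le hk (div_pos hC₂ hβ) (l + β * N₂)
  refine ⟨β, hβ, C₁ * (1 + exp M), by positivity, ?_⟩
  rintro x ⟨hx0, hx1⟩
  obtain ⟨t, ht, rfl⟩ : ∃ t > 0, x = exp (-t) :=
    ⟨-log x, neg_pos.2 (log_neg hx0 hx1), by rw [neg_neg, exp_log hx0]⟩
  simp only [← exp_mul, log_exp]
  have hfirst : -t * β * N₁ = -t * l := by rw [hβ_def]; field_simp
  have hsecond : -t * β * -N₂ + C₂ / (-t * β * exp (-t * (1 / n))) ≤ M + -t * l := by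
    have hquot : C₂ / (-t * β * exp (-t * (1 / n))) = -(C₂ / β * exp (1 / n * t) / t) := by
      rw [show -t * (1 / (n : ℝ)) = -(1 / n * t) by ring, exp_neg]
      field_simp
    linarith [hM t ht]
  calc C₁ * exp (-t * β * N₁) + C₁ * exp (-t * β * -N₂) * exp (C₂ / (-t * β * exp (-t * (1 / n))))
      = C₁ * exp (-t * l) + C₁ * exp (-t * β * -N₂ + C₂ / (-t * β * exp (-t * (1 / n)))) := by
        rw [hfirst, exp_add, mul_assoc]
    _ ≤ C₁ * exp (-t * l) + C₁ * exp (M + -t * l) := by gcongr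
    _ = C₁ * (1 + exp M) * exp (-t * l) := by rw [exp_add]; ring

/-- Exponential decay dominates polynomial growth: for fixed `N₁, N₂, C₁ > 0`
and `n ≥ 1`, for every `l > 0` and `C₂ > 0` there are `β > 0` and `C' > 0` such
that for all `x ∈ (0,1)`, with `ε = x^β`,
`C₁ ε^{N₁} + C₁ ε^{-N₂} exp(C₂ / (log ε · x^{1/n})) ≤ C' x^l`. -/
theorem stmt_3 (N₁ N₂ C₁ : ℝ) (n : ℕ) (hN₁ : 0 < N₁) (hN₂ : 0 < N₂)
    (hC₁ : 0 < C₁) (hn : 1 ≤ n) :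
    ∀ l > (0 : ℝ), ∀ C₂ > (0 : ℝ), ∃ β > (0 : ℝ), ∃ C' > (0 : ℝ),
      ∀ x ∈ Set.Ioo (0 : ℝ) 1,
        C₁ * (x ^ β) ^ N₁ +
          C₁ * (x ^ β) ^ (-N₂) *
            Real.exp (C₂ / (Real.log (x ^ β) * x ^ ((1 : ℝ) / n))) ≤
        C' * x ^ l :=
  stmt_3_general N₁ N₂ C₁ n hN₁ hC₁ hn
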